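/- arXiv:1603.06336 — 3 statements merged into one kernel-verified Lean document; each statement's English description precedes it below -/
import Mathlib

section
/- Let k_D, k_S > 0 and integer α ≥ 1. For all r in [0,1), the derivative of F_PH satisfies 0 < F_PH'(r) ≤ (1/(2k_D) + 2αk_S/k_D²)·(1/√(r+1)). -/
open Real Set

/-- The Phong brightness function with attenuation. -/
noncomputable def FPH (kD kS : ℝ) (α : ℕ) (r : ℝ) : ℝ :=
  if 1 ≤ r then Real.sqrt (r + 1) / kD
  else (r + 1) ^ ((α : ℝ) + 1 / 2) /
    (kD * (r + 1) ^ (α : ℝ) + kS * (r + 1) ^ ((1 : ℝ) / 2) * (1 - r) ^ (α : ℝ))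

/-- for `r ∈ [0,1)`,
`0 < F_PH'(r) ≤ (1/(2k_D) + 2αk_S/k_D²)·(1/√(r+1))`. -/
theorem stmt8 (kD kS : ℝ) (hD : 0 < kD) (hS : 0 < kS) (α : ℕ) (hα : 1 ≤ α) :
    ∀ r : ℝ, 0 ≤ r → r < 1 →
      0 < deriv (FPH kD kS α) r ∧
      deriv (FPH kD kS α) r ≤
        (1 / (2 * kD) + 2 * (α : ℝ) * kS / kD ^ 2) * (1 / Real.sqrt (r + 1)) := by
  obtain ⟨m, rfl⟩ : ∃ m, α = m + 1 := ⟨α - 1, (Nat.succ_pred_eq_of_pos hα).symm⟩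
  intro r hr0 hr1
  have hA : (0:ℝ) < r + 1 := by linarith
  have hB : (0:ℝ) < 1 - r := by linarith
  set s := Real.sqrt (r + 1) with hs_def
  have hs0 : 0 < s := Real.sqrt_pos.2 hA
  have hs2 : s ^ 2 = r + 1 := Real.sq_sqrt hA.le
  set g : ℝ → ℝ := fun x => (Real.sqrt (x + 1) * (x + 1) ^ (m + 1)) /
      (kD * (x + 1) ^ (m + 1) + kS * Real.sqrt (x + 1) * (1 - x) ^ (m + 1)) with hg
  -- FPH agrees with g near r
  have heq : FPH kD kS (m + 1) =ᶠ[nhds r] g := by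
    filter_upwards [Ioo_mem_nhds (show -1 < r by linarith) hr1] with x hx
    obtain ⟨hx1, hx2⟩ := hx
    have hxA : (0:ℝ) < x + 1 := by linarith
    simp only [FPH, if_neg (not_le.2 hx2), hg]
    rw [Real.rpow_add hxA, Real.rpow_natCast, Real.rpow_natCast,
      ← Real.sqrt_eq_rpow]
    ring
  -- derivative of the numerator
  have hnum : HasDerivAt (fun x : ℝ => Real.sqrt (x + 1) * (x + 1) ^ (m + 1))
      (1 / (2 * s) * (r + 1) ^ (m + 1) + s * ((m + 1) * (r + 1) ^ m)) r := by
    have h1 : HasDerivAt (fun x : ℝ => x + 1) 1 r := (hasDerivAt_id r).add_const 1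
    have hsq : HasDerivAt (fun x : ℝ => Real.sqrt (x + 1)) (1 / (2 * s)) r := by
      have := (Real.hasDerivAt_sqrt (ne_of_gt hA)).comp r h1
      simpa [Function.comp_def] using this
    have hp : HasDerivAt (fun x : ℝ => (x + 1) ^ (m + 1)) ((m + 1) * (r + 1) ^ m) r := by
      have := h1.pow (m + 1)
      simpa [Pi.pow_def] using this
    have := hsq.mul hp
    exact this
  -- derivative of the denominator
  have hden : HasDerivAt (fun x : ℝ => kD * (x + 1) ^ (m + 1) + kS * Real.sqrt (x + 1) * (1 - x) ^ (m + 1))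
      (kD * ((m + 1) * (r + 1) ^ m) +
        kS * (1 / (2 * s) * (1 - r) ^ (m + 1) - s * ((m + 1) * (1 - r) ^ m))) r := by
    have h1 : HasDerivAt (fun x : ℝ => x + 1) 1 r := (hasDerivAt_id r).add_const 1
    have hsq : HasDerivAt (fun x : ℝ => Real.sqrt (x + 1)) (1 / (2 * s)) r := by
      have := (Real.hasDerivAt_sqrt (ne_of_gt hA)).comp r h1
      simpa [Function.comp_def] using this
    have hp : HasDerivAt (fun x : ℝ => (x + 1) ^ (m + 1)) ((m + 1) * (r + 1) ^ m) r := by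
      have := h1.pow (m + 1)
      simpa [Pi.pow_def] using this
    have h2 : HasDerivAt (fun x : ℝ => 1 - x) (-1) r := by
      simpa using (hasDerivAt_id r).const_sub 1
    have hq : HasDerivAt (fun x : ℝ => (1 - x) ^ (m + 1)) (-((m + 1) * (1 - r) ^ m)) r := by
      have := h2.pow (m + 1)
      convert this using 1
      · rfl
      · rfl
      · rfl
      push_cast
      ring
    have := ((hp.const_mul kD).add (((hsq.const_mul kS).mul hq)))
    convert this using 1
    · rfl
    · rfl
    · rfl
    push_cast
    ring
  have hdpos : 0 < kD * (r + 1) ^ (m + 1) + kS * s * (1 - r) ^ (m + 1) := by positivity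
  have hdiv : HasDerivAt g
      (((1 / (2 * s) * (r + 1) ^ (m + 1) + s * ((m + 1) * (r + 1) ^ m)) *
          (kD * (r + 1) ^ (m + 1) + kS * s * (1 - r) ^ (m + 1)) -
        s * (r + 1) ^ (m + 1) *
          (kD * ((m + 1) * (r + 1) ^ m) +
            kS * (1 / (2 * s) * (1 - r) ^ (m + 1) - s * ((m + 1) * (1 - r) ^ m)))) /
        (kD * (r + 1) ^ (m + 1) + kS * s * (1 - r) ^ (m + 1)) ^ 2) r :=
    hnum.div hden (ne_of_gt hdpos)
  have hderiv : deriv (FPH kD kS (m + 1)) r =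
      ((kD / 2) * s * (r + 1) ^ (2 * m + 1) + 2 * kS * (m + 1) * (r + 1) ^ (m + 1) * (1 - r) ^ m) /
        (kD * (r + 1) ^ (m + 1) + kS * s * (1 - r) ^ (m + 1)) ^ 2 := by
    rw [heq.deriv_eq, hdiv.deriv]
    congr 1
    have hsne : s ≠ 0 := ne_of_gt hs0
    rw [show (1:ℝ) - r = 2 - s ^ 2 from by linarith [hs2], show r + 1 = s ^ 2 from hs2.symm]
    field_simp
    ring
  set P := (r + 1) ^ (m + 1) with hP
  have hPpos : 0 < P := pow_pos hA (m + 1)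
  have hQpos : 0 < (1 - r) ^ m := pow_pos hB m
  have hNpos : 0 < kD / 2 * s * (r + 1) ^ (2 * m + 1) +
      2 * kS * ((m : ℝ) + 1) * P * (1 - r) ^ m := by
    have t1 : 0 < kD / 2 * s * (r + 1) ^ (2 * m + 1) :=
      mul_pos (mul_pos (by linarith) hs0) (pow_pos hA _)
    have t2 : 0 < 2 * kS * ((m : ℝ) + 1) * P * (1 - r) ^ m := by
      have : (0:ℝ) < 2 * kS * ((m : ℝ) + 1) := by positivity
      exact mul_pos (mul_pos this hPpos) hQpos
    linarith
  constructor
  · rw [hderiv]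
    exact div_pos hNpos (pow_pos hdpos 2)
  · rw [hderiv, mul_one_div, div_le_div_iff₀ (pow_pos hdpos 2) hs0]
    push_cast
    have hkey : s * (1 - r) ^ m ≤ P := by
      have h1 : (1 - r) ^ m ≤ 1 := pow_le_one₀ hB.le (by linarith)
      have h2 : s ≤ r + 1 := by nlinarith [hs2, sq_nonneg (s - 1)]
      have h3 : r + 1 ≤ P := le_self_pow₀ (by linarith) (Nat.succ_ne_zero m)
      calc s * (1 - r) ^ m ≤ s * 1 := by nlinarith
        _ = s := mul_one s
        _ ≤ P := by linarith
    have hdd : kD * P ≤ kD * P + kS * s * (1 - r) ^ (m + 1) := by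
      nlinarith [mul_pos (mul_pos hS hs0) (pow_pos hB (m + 1))]
    have hsq' : (kD * P) ^ 2 ≤ (kD * P + kS * s * (1 - r) ^ (m + 1)) ^ 2 :=
      pow_le_pow_left₀ (by positivity) hdd 2
    have hCpos : (0:ℝ) ≤ 1 / (2 * kD) + 2 * ((m : ℝ) + 1) * kS / kD ^ 2 := by positivity
    have hC2 : (1 / (2 * kD) + 2 * ((m : ℝ) + 1) * kS / kD ^ 2) * (kD * P) ^ 2 =
        kD / 2 * P ^ 2 + 2 * ((m : ℝ) + 1) * kS * P ^ 2 := by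
      field_simp
    have hle2 : (1 / (2 * kD) + 2 * ((m : ℝ) + 1) * kS / kD ^ 2) * (kD * P) ^ 2 ≤
        (1 / (2 * kD) + 2 * ((m : ℝ) + 1) * kS / kD ^ 2) *
          (kD * P + kS * s * (1 - r) ^ (m + 1)) ^ 2 :=
      mul_le_mul_of_nonneg_left hsq' hCpos
    have e1 : (kD / 2 * s * (r + 1) ^ (2 * m + 1) +
        2 * kS * ((m : ℝ) + 1) * P * (1 - r) ^ m) * s =
        kD / 2 * P ^ 2 + 2 * kS * ((m : ℝ) + 1) * s * P * (1 - r) ^ m := by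
      rw [hP]
      linear_combination (kD / 2 * (r + 1) ^ (2 * m + 1)) * hs2
    rw [e1]
    have hkey2 : 2 * kS * ((m : ℝ) + 1) * s * P * (1 - r) ^ m ≤
        2 * kS * ((m : ℝ) + 1) * P * P := by
      have h0 : (0:ℝ) ≤ 2 * kS * ((m : ℝ) + 1) * P := by positivity
      calc 2 * kS * ((m : ℝ) + 1) * s * P * (1 - r) ^ m
          = 2 * kS * ((m : ℝ) + 1) * P * (s * (1 - r) ^ m) := by ring
        _ ≤ 2 * kS * ((m : ℝ) + 1) * P * P := mul_le_mul_of_nonneg_left hkey h0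
    linarith [hle2, hC2.symm.le, hkey2]
end

section
/- Under the assumptions that 0 < F'(r) ≤ C₀/√(r+1) for all r ≥ 0 and |D_p W(x,p)| ≤ C₁|p| and W(x,p) ≥ f²|p|², the map p ↦ F(W(x,p)) is Lipschitz in p uniformly in x ∈ Ω: |F(W(x,p)) − F(W(x,q))| ≤ C|p − q| for a constant C independent of x. -/
open Real Set

/-- validation of (H3): if `0 < F'(r) ≤ C₀/√(r+1)`, `|D_p W(x,p)| ≤ C₁|p|`
and `W(x,p) ≥ f²|p|²`, then `p ↦ F(W(x,p))` is Lipschitz in `p`, uniformly in `x ∈ Ω`. -/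
theorem stmt14 (f : ℝ) (hf : 0 < f) (Ω : Set (EuclideanSpace ℝ (Fin 2)))
    (hΩ : Bornology.IsBounded Ω)
    (F : ℝ → ℝ) (hFdiff : DifferentiableOn ℝ F (Ici 0))
    (C₀ : ℝ) (hF' : ∀ r : ℝ, 0 ≤ r → 0 < deriv F r ∧ deriv F r ≤ C₀ / Real.sqrt (r + 1))
    (W : EuclideanSpace ℝ (Fin 2) → EuclideanSpace ℝ (Fin 2) → ℝ)
    (DpW : EuclideanSpace ℝ (Fin 2) → EuclideanSpace ℝ (Fin 2) → EuclideanSpace ℝ (Fin 2))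
    (C₁ : ℝ)
    (hWlow : ∀ x ∈ Ω, ∀ p : EuclideanSpace ℝ (Fin 2), f ^ 2 * ‖p‖ ^ 2 ≤ W x p)
    (hDpW : ∀ x ∈ Ω, ∀ p : EuclideanSpace ℝ (Fin 2),
      HasGradientAt (W x) (DpW x p) p ∧ ‖DpW x p‖ ≤ C₁ * ‖p‖) :
    ∃ C : ℝ, ∀ x ∈ Ω, ∀ p q : EuclideanSpace ℝ (Fin 2),
      |F (W x p) - F (W x q)| ≤ C * ‖p - q‖ := by
  rcases Set.eq_empty_or_nonempty Ω with hE | ⟨x₀, hx₀⟩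
  · exact ⟨0, by simp [hE]⟩
  -- basic positivity facts
  have hC₀pos : 0 < C₀ := by
    have h := hF' 0 le_rfl
    have : (0:ℝ) < C₀ / Real.sqrt 1 := lt_of_lt_of_le h.1 (by simpa using h.2)
    simpa using this
  have hC₁ : 0 ≤ C₁ := by
    have hp1 : ‖(EuclideanSpace.single 0 1 : EuclideanSpace ℝ (Fin 2))‖ = 1 := by
      simp [EuclideanSpace.norm_single]
    have h2 := (hDpW x₀ hx₀ (EuclideanSpace.single 0 1)).2
    rw [hp1, mul_one] at h2
    exact le_trans (norm_nonneg _) h2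
  refine ⟨C₀ * C₁ / f, ?_⟩
  intro x hx p q
  -- W x p ≥ 0 always
  have hW0 : ∀ r : EuclideanSpace ℝ (Fin 2), 0 ≤ W x r := fun r =>
    le_trans (by positivity) (hWlow x hx r)
  -- F is differentiable (two-sided) at each W x r since deriv F ≠ 0
  have hFd : ∀ r : EuclideanSpace ℝ (Fin 2), HasDerivAt F (deriv F (W x r)) (W x r) := by
    intro r
    have h := (hF' (W x r) (hW0 r)).1
    exact (differentiableAt_of_deriv_ne_zero (ne_of_gt h)).hasDerivAt
  -- the composed function has a Fréchet derivative bounded by C₀C₁/f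
  have key : ∀ r ∈ (Set.univ : Set (EuclideanSpace ℝ (Fin 2))),
      HasFDerivWithinAt (fun p => F (W x p))
        (deriv F (W x r) • (InnerProductSpace.toDual ℝ _ (DpW x r))) Set.univ r ∧
      ‖deriv F (W x r) • (InnerProductSpace.toDual ℝ (EuclideanSpace ℝ (Fin 2)) (DpW x r))‖
        ≤ C₀ * C₁ / f := by
    intro r _
    have hgrad := (hDpW x hx r).1.hasFDerivAt
    have hcomp := (hFd r).comp_hasFDerivAt r hgrad
    constructor
    · exact hcomp.hasFDerivWithinAt
    · have hderiv := hF' (W x r) (hW0 r)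
      have hnorm : ‖deriv F (W x r) • (InnerProductSpace.toDual ℝ
          (EuclideanSpace ℝ (Fin 2)) (DpW x r))‖ = deriv F (W x r) * ‖DpW x r‖ := by
        rw [norm_smul, Real.norm_eq_abs, abs_of_pos hderiv.1,
          LinearIsometryEquiv.norm_map]
      rw [hnorm]
      have hb := (hDpW x hx r).2
      have hsq : f * ‖r‖ ≤ Real.sqrt (W x r + 1) := by
        have h1 : (f * ‖r‖) ^ 2 ≤ W x r + 1 := by
          have := hWlow x hx r; nlinarith
        calc f * ‖r‖ = Real.sqrt ((f * ‖r‖) ^ 2) := by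
              rw [Real.sqrt_sq (by positivity)]
          _ ≤ Real.sqrt (W x r + 1) := Real.sqrt_le_sqrt h1
      have hsqrt_pos : 0 < Real.sqrt (W x r + 1) := Real.sqrt_pos.2 (by linarith [hW0 r])
      calc deriv F (W x r) * ‖DpW x r‖
          ≤ (C₀ / Real.sqrt (W x r + 1)) * (C₁ * ‖r‖) := by
            apply mul_le_mul hderiv.2 hb (norm_nonneg _)
            positivity
        _ = C₀ * C₁ * ‖r‖ / Real.sqrt (W x r + 1) := by ring
        _ ≤ C₀ * C₁ / f := by
            rw [div_le_div_iff₀ hsqrt_pos hf]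
            nlinarith [mul_le_mul_of_nonneg_left hsq
              (by positivity : (0:ℝ) ≤ C₀ * C₁)]
  have := (convex_univ (𝕜 := ℝ)).norm_image_sub_le_of_norm_hasFDerivWithin_le
    (fun r hr => (key r hr).1) (fun r hr => (key r hr).2)
    (Set.mem_univ q) (Set.mem_univ p)
  simpa [Real.norm_eq_abs] using this
end

section
/- Let k_D, k_S > 0, integer α ≥ 1, and suppose I(x) − k_A I_A(x) ≥ δ > 0 on Ω. Set M^{PH} = −(1/2)ln(δf²/(k_D + k_S)). Then for every x ∈ Ω and ξ ∈ ℝ², H^{PH}(x, M^{PH}, ξ) ≥ 0, where H^{PH}(x,u,p) = −e^{−2u} + (I(x)−k_A I_A(x))f²F_PH(W(x,p)) with F_PH(r) = √(r+1)/k_D for r ≥ 1 and F_PH(r) = (r+1)^{α+1/2}/(k_D(r+1)^α + k_S(r+1)^{1/2}(1−r)^α) for 0 ≤ r < 1. -/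
open Real

lemma FPH_ge (kD kS : ℝ) (hD : 0 < kD) (hS : 0 < kS) (α : ℕ) (r : ℝ) (hr : 0 ≤ r) :
    1 / (kD + kS) ≤ FPH kD kS α r := by
  have hDS : 0 < kD + kS := by linarith
  unfold FPH
  split_ifs with h
  · have h1 : (1 : ℝ) ≤ Real.sqrt (r + 1) := by
      rw [Real.one_le_sqrt]; linarith
    calc 1 / (kD + kS) ≤ 1 / kD := by
          apply one_div_le_one_div_of_le hD; linarith
      _ ≤ Real.sqrt (r + 1) / kD := by gcongr
  · push_neg at h
    have hb : (1 : ℝ) ≤ r + 1 := by linarith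
    have hbp : (0 : ℝ) < r + 1 := by linarith
    have h1r : (0 : ℝ) ≤ 1 - r := by linarith
    have hpow1 : (1 : ℝ) ≤ (r + 1) ^ ((1:ℝ)/2) := Real.one_le_rpow hb (by norm_num)
    have hpowα : (0 : ℝ) < (r + 1) ^ (α : ℝ) := Real.rpow_pos_of_pos hbp _
    have hden : 0 < kD * (r + 1) ^ (α : ℝ) + kS * (r + 1) ^ ((1:ℝ)/2) * (1 - r) ^ (α : ℝ) := by
      have h2 : 0 ≤ kS * (r + 1) ^ ((1:ℝ)/2) * (1 - r) ^ (α : ℝ) := by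
        apply mul_nonneg (mul_nonneg hS.le (by positivity))
        exact Real.rpow_nonneg h1r _
      nlinarith [mul_pos hD hpowα]
    rw [div_le_div_iff₀ hDS hden]
    have hsplit : (r + 1) ^ ((α : ℝ) + 1/2) = (r + 1) ^ (α : ℝ) * (r + 1) ^ ((1:ℝ)/2) :=
      Real.rpow_add hbp _ _
    have hmono : (1 - r) ^ (α : ℝ) ≤ (r + 1) ^ (α : ℝ) :=
      Real.rpow_le_rpow h1r (by linarith) (Nat.cast_nonneg α)
    have e1 : kD * (r + 1) ^ (α : ℝ) ≤ kD * ((r + 1) ^ (α : ℝ) * (r + 1) ^ ((1:ℝ)/2)) := by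
      nlinarith [mul_nonneg (mul_nonneg hD.le hpowα.le)
        (by linarith : (0:ℝ) ≤ (r + 1) ^ ((1:ℝ)/2) - 1)]
    have e2 : kS * (r + 1) ^ ((1:ℝ)/2) * (1 - r) ^ (α : ℝ)
        ≤ kS * ((r + 1) ^ (α : ℝ) * (r + 1) ^ ((1:ℝ)/2)) := by
      nlinarith [mul_le_mul_of_nonneg_left hmono
        (by positivity : (0:ℝ) ≤ kS * (r + 1) ^ ((1:ℝ)/2))]
    rw [hsplit]
    nlinarith

/-- if `I − k_A I_A ≥ δ > 0` on `Ω` and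
`M^{PH} = −(1/2)ln(δf²/(k_D+k_S))`, then `H^{PH}(x,M^{PH},ξ) ≥ 0` for all `x ∈ Ω`,
`ξ ∈ ℝ²`, where `H^{PH}(x,u,p) = −e^{−2u} + (I(x)−k_A I_A(x))f²F_PH(W(x,p))`. -/
theorem stmt19 (f δ kD kS kA : ℝ) (hf : 0 < f) (hδ : 0 < δ)
    (hD : 0 < kD) (hS : 0 < kS) (α : ℕ) (hα : 1 ≤ α)
    (Ω : Set (EuclideanSpace ℝ (Fin 2)))
    (I IA : EuclideanSpace ℝ (Fin 2) → ℝ) (hI : ∀ x ∈ Ω, δ ≤ I x - kA * IA x)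
    (W : EuclideanSpace ℝ (Fin 2) → EuclideanSpace ℝ (Fin 2) → ℝ)
    (hW : ∀ x ∈ Ω, ∀ ξ : EuclideanSpace ℝ (Fin 2), 0 ≤ W x ξ) :
    ∀ x ∈ Ω, ∀ ξ : EuclideanSpace ℝ (Fin 2),
      0 ≤ -Real.exp (-2 * (-(1 / 2) * Real.log (δ * f ^ 2 / (kD + kS)))) +
        (I x - kA * IA x) * f ^ 2 * FPH kD kS α (W x ξ) := by
  intro x hx ξ
  have hDS : 0 < kD + kS := by linarith
  have hc : 0 < δ * f ^ 2 / (kD + kS) := by positivity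
  have harg : -2 * (-(1 / 2) * Real.log (δ * f ^ 2 / (kD + kS)))
      = Real.log (δ * f ^ 2 / (kD + kS)) := by ring
  rw [harg, Real.exp_log hc]
  have hF := FPH_ge kD kS hD hS α (W x ξ) (hW x hx ξ)
  have hIx := hI x hx
  have hFnn : 0 ≤ FPH kD kS α (W x ξ) := le_trans (by positivity) hF
  have key : δ * f ^ 2 / (kD + kS) ≤ (I x - kA * IA x) * f ^ 2 * FPH kD kS α (W x ξ) := by
    have h1 : δ * f ^ 2 / (kD + kS) = δ * f ^ 2 * (1 / (kD + kS)) := by ring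
    rw [h1]
    have h2 : δ * f ^ 2 * (1 / (kD + kS)) ≤ δ * f ^ 2 * FPH kD kS α (W x ξ) := by
      apply mul_le_mul_of_nonneg_left hF (by positivity)
    refine h2.trans ?_
    apply mul_le_mul_of_nonneg_right _ hFnn
    nlinarith
  linarith
end
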